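/- Let f_1, …, f_k be real analytic functions on a real interval I, and suppose that for each i with 1 ≤ i ≤ k the Wronskian W(f_1, …, f_i) has only finitely many zeros in I. Then for any real constants a_1, …, a_k that are not all zero, Z_I(a_1 f_1 + … + a_k f_k) ≤ (1 + Σ_{i=1}^k Z_I(W(f_1, …, f_i)))·k − 1. -/

import Mathlib

/-- The Wronskian of the first `j` functions of the family `f`, with derivatives
taken within the set `I`. -/
noncomputable def wronskianOn (I : Set ℝ) (f : ℕ → ℝ → ℝ) (j : ℕ) (x : ℝ) : ℝ :=
  (Matrix.of fun r c : Fin j => iteratedDerivWithin (r : ℕ) (f (c : ℕ)) I x).det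

/-!
Let `j` be the last index with `a j ≠ 0`, so that `g = ∑ a_i f_i` only involves `f_0, …, f_j`.
Between the first and the last of any `j + 1` zeros of `g` one of the Wronskians
`W(f_0, …, f_{i-1})`, `i ≤ j + 1`, vanishes. Indeed, replacing `f_j` by `g` multiplies
`W(f_0, …, f_j)` by `a_j` and leaves the smaller Wronskians alone; if `f_0` has no zero there,
Rolle's theorem gives `j` zeros of `(g / f_0)'`, and
`W(h_0, …, h_m) = h_0 ^ (m + 1) * W((h_1 / h_0)', …, (h_m / h_0)')` lets one induct on `j`.
Cutting the zeros of `g` into blocks of `j + 1` consecutive ones, distinct blocks span disjoint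
intervals, each containing a Wronskian zero, so there are at most `Σ Z(W_i)` complete blocks.
-/

open Set
open scoped ContDiff

section Wronskian

variable {s : Set ℝ} {f g : ℕ → ℝ → ℝ} {j : ℕ} {x : ℝ}

theorem wronskianOn_one : wronskianOn s f 1 x = f 0 x := by
  simp [wronskianOn]

theorem wronskianOn_congr (h : ∀ c < j, EqOn (f c) (g c) s) (hx : x ∈ s) :
    wronskianOn s f j x = wronskianOn s g j x := by
  unfold wronskianOn
  congr 1
  ext r c
  exact iteratedDerivWithin_congr (h c c.isLt) hx

theorem wronskianOn_subset {t : Set ℝ} (hst : s ⊆ t) (hs : UniqueDiffOn ℝ s)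
    (ht : UniqueDiffOn ℝ t) (hf : ∀ c < j, ContDiffOn ℝ ∞ (f c) t) (hx : x ∈ s) :
    wronskianOn s f j x = wronskianOn t f j x := by
  unfold wronskianOn
  congr 1
  ext r c
  simp only [Matrix.of_apply, iteratedDerivWithin_eq_iteratedFDerivWithin]
  rw [iteratedFDerivWithin_subset hst hs ht ((hf c c.isLt).of_le (by exact_mod_cast le_top)) hx]

theorem wronskianOn_update_sum (hs : UniqueDiffOn ℝ s) (hx : x ∈ s)
    (hf : ∀ c ≤ j, ContDiffOn ℝ ∞ (f c) s) (a : ℕ → ℝ) :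
    wronskianOn s (Function.update f j fun y => ∑ c ∈ Finset.range (j + 1), a c * f c y)
      (j + 1) x = a j * wronskianOn s f (j + 1) x := by
  set M := Matrix.of fun r c : Fin (j + 1) => iteratedDerivWithin r (f c) s x
  have hcol : (Matrix.of fun r c : Fin (j + 1) => iteratedDerivWithin r
      (Function.update f j (fun y => ∑ c ∈ Finset.range (j + 1), a c * f c y) c) s x) =
      M.updateCol (Fin.last j) fun r => ∑ c : Fin (j + 1), a c • M r c := by
    ext r c
    rcases eq_or_ne c (Fin.last j) with rfl | hc
    · simp only [Matrix.of_apply, Fin.val_last, Function.update_self, Matrix.updateCol_self, M,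
        smul_eq_mul]
      have hfc : ∀ c ∈ Finset.range (j + 1), ContDiffWithinAt ℝ r (f c) s x := fun c hc =>
        ((hf c (Nat.lt_succ_iff.mp (Finset.mem_range.mp hc))).contDiffWithinAt hx).of_le
          (by exact_mod_cast le_top)
      rw [iteratedDerivWithin_fun_sum hx hs fun c hc => contDiffWithinAt_const.mul (hfc c hc),
        ← Fin.sum_univ_eq_sum_range (fun c => iteratedDerivWithin r (fun y => a c * f c y) s x)]
      refine Finset.sum_congr rfl fun c _ => ?_
      exact iteratedDerivWithin_const_mul hx hs _ (hfc c (Finset.mem_range.mpr c.isLt))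
    · have : (c : ℕ) ≠ j := fun h => hc (Fin.ext h)
      simp [M, hc, this]
  rw [wronskianOn, hcol, Matrix.det_updateCol_sum, smul_eq_mul, Fin.val_last]
  rfl

theorem wronskianOn_mul_left (hs : UniqueDiffOn ℝ s) (hx : x ∈ s) {φ : ℝ → ℝ}
    (hφ : ContDiffOn ℝ ∞ φ s) (hg : ∀ c < j, ContDiffOn ℝ ∞ (g c) s) :
    wronskianOn s (fun c y => φ y * g c y) j x = φ x ^ j * wronskianOn s g j x := by
  -- by Leibniz' rule the matrix is a lower triangular one, with diagonal `φ x`, times that of `g`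
  set L := Matrix.of fun r i : Fin j => ((r : ℕ).choose i : ℝ) * iteratedDerivWithin (r - i) φ s x
  have hL : L.IsLowerTriangular := fun r i hri => by
    simp [L, Nat.choose_eq_zero_of_lt (show (r : ℕ) < i from hri)]
  have hprod : (Matrix.of fun r c : Fin j => iteratedDerivWithin r (fun y => φ y * g c y) s x) =
      L * Matrix.of fun i c : Fin j => iteratedDerivWithin i (g c) s x := by
    ext r c
    have hcomm : (fun y => φ y * g c y) = g c * φ := funext fun y => mul_comm _ _
    have hle : (r : ℕ) + 1 ≤ j := r.isLt
    rw [Matrix.of_apply, hcomm, iteratedDerivWithin_mul hx hs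
      (((hg c c.isLt).contDiffWithinAt hx).of_le (by exact_mod_cast le_top))
      ((hφ.contDiffWithinAt hx).of_le (by exact_mod_cast le_top)), Matrix.mul_apply]
    simp only [L, Matrix.of_apply]
    rw [Fin.sum_univ_eq_sum_range (fun i => ((r : ℕ).choose i : ℝ) *
      iteratedDerivWithin (r - i) φ s x * iteratedDerivWithin i (g c) s x)]
    rw [← Finset.sum_subset (Finset.range_subset_range.mpr hle) fun i _ hi => by
      rw [Nat.choose_eq_zero_of_lt (by simpa using hi), Nat.cast_zero, zero_mul, zero_mul]]
    exact Finset.sum_congr rfl fun i _ => by ring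
  rw [wronskianOn, hprod, Matrix.det_mul, Matrix.det_of_isLowerTriangular L hL]
  simp [L, wronskianOn]

theorem wronskianOn_succ_of_eqOn_one (h0 : EqOn (g 0) 1 s) (hx : x ∈ s) :
    wronskianOn s g (j + 1) x = wronskianOn s (fun c => derivWithin (g (c + 1)) s) j x := by
  have hcol : ∀ r : Fin (j + 1), iteratedDerivWithin r (g 0) s x = if (r : ℕ) = 0 then 1 else 0 :=
    fun r => by rw [iteratedDerivWithin_congr h0 hx, Pi.one_def, iteratedDerivWithin_const]
  rw [wronskianOn, Matrix.det_succ_column_zero, Fintype.sum_eq_single 0 fun r hr => by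
    simp [hcol, Fin.val_ne_zero_iff.mpr hr]]
  simp only [wronskianOn, Matrix.of_apply, Fin.val_zero, pow_zero, one_mul, Fin.succAbove_zero]
  rw [iteratedDerivWithin_zero, h0 hx, Pi.one_apply, one_mul]
  congr 1
  ext r c
  simp [iteratedDerivWithin_succ']

theorem wronskianOn_succ_eq_pow_mul_wronskianOn_derivWithin_div (hs : UniqueDiffOn ℝ s)
    (hx : x ∈ s) (hf : ∀ c ≤ j, ContDiffOn ℝ ∞ (f c) s) (hf0 : ∀ y ∈ s, f 0 y ≠ 0) :
    wronskianOn s f (j + 1) x =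
      f 0 x ^ (j + 1) *
        wronskianOn s (fun c => derivWithin (fun y => f (c + 1) y / f 0 y) s) j x := by
  have hquot : ∀ c ≤ j, ContDiffOn ℝ ∞ (fun y => f c y / f 0 y) s := fun c hc =>
    (hf c hc).div (hf 0 j.zero_le) hf0
  calc wronskianOn s f (j + 1) x
      = wronskianOn s (fun c y => f 0 y * (f c y / f 0 y)) (j + 1) x :=
        wronskianOn_congr (fun c _ y hy => (mul_div_cancel₀ _ (hf0 y hy)).symm) hx
    _ = f 0 x ^ (j + 1) * wronskianOn s (fun c y => f c y / f 0 y) (j + 1) x :=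
        wronskianOn_mul_left hs hx (hf 0 j.zero_le) fun c hc => hquot c (by omega)
    _ = _ := by
        rw [wronskianOn_succ_of_eqOn_one (fun y hy => div_self (hf0 y hy)) hx]

end Wronskian

theorem Set.OrdConnected.uniqueDiffOn_of_lt {s : Set ℝ} (hs : s.OrdConnected) {a b : ℝ}
    (ha : a ∈ s) (hb : b ∈ s) (hab : a < b) : UniqueDiffOn ℝ s :=
  uniqueDiffOn_convex hs.convex
    ⟨(a + b) / 2, interior_mono (hs.out ha hb) (by rw [interior_Icc]; constructor <;> linarith)⟩

theorem exists_strictMono_derivWithin_eq_zero {s : Set ℝ} (hs : s.OrdConnected) {q : ℝ → ℝ}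
    (hq : ContinuousOn q s) {n : ℕ} {x : Fin (n + 2) → ℝ} (hx : StrictMono x)
    (hxs : ∀ t, x t ∈ s) (hqx : ∀ t, q (x t) = 0) :
    ∃ y : Fin (n + 1) → ℝ, StrictMono y ∧ (∀ t, y t ∈ s) ∧ ∀ t, derivWithin q s (y t) = 0 := by
  have hrolle : ∀ t : Fin (n + 1), ∃ y ∈ Ioo (x t.castSucc) (x t.succ), derivWithin q s y = 0 := by
    intro t
    have hsub := hs.out (hxs t.castSucc) (hxs t.succ)
    obtain ⟨y, hy, hqy⟩ := exists_deriv_eq_zero (hx t.castSucc_lt_succ) (hq.mono hsub)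
      ((hqx _).trans (hqx _).symm)
    refine ⟨y, hy, ?_⟩
    rw [derivWithin_of_mem_nhds (Filter.mem_of_superset (Ioo_mem_nhds hy.1 hy.2)
      (Ioo_subset_Icc_self.trans hsub)), hqy]
  choose y hy hqy using hrolle
  refine ⟨y, fun t t' htt' => ?_, fun t => hs.out (hxs t.castSucc) (hxs t.succ)
    (Ioo_subset_Icc_self (hy t)), hqy⟩
  calc y t < x t.succ := (hy t).2
    _ ≤ x t'.castSucc := hx.monotone (Fin.succ_le_castSucc_iff.mpr htt')
    _ < y t' := (hy t').1

theorem exists_wronskianOn_eq_zero_of_strictMono {s : Set ℝ} (hs : s.OrdConnected) :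
    ∀ {n : ℕ} {f : ℕ → ℝ → ℝ} {x : Fin (n + 1) → ℝ}, (∀ i ≤ n, ContDiffOn ℝ ∞ (f i) s) →
      StrictMono x → (∀ t, x t ∈ s) → (∀ t, f n (x t) = 0) →
      ∃ i ∈ Finset.Icc 1 (n + 1), ∃ y ∈ s, wronskianOn s f i y = 0 := by
  intro n
  induction n with
  | zero =>
    intro f x _ _ hxs hfx
    exact ⟨1, by simp, x 0, hxs 0, by rw [wronskianOn_one]; exact hfx 0⟩
  | succ n ih =>
    intro f x hf hx hxs hfx
    by_cases hf0 : ∃ y ∈ s, f 0 y = 0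
    · obtain ⟨y, hy, hfy⟩ := hf0
      exact ⟨1, by simp, y, hy, by rwa [wronskianOn_one]⟩
    push Not at hf0
    have hsu : UniqueDiffOn ℝ s := hs.uniqueDiffOn_of_lt (hxs 0) (hxs 1) (hx Fin.zero_lt_one)
    obtain ⟨y, hy, hys, hqy⟩ :=
      exists_strictMono_derivWithin_eq_zero hs (q := fun y => f (n + 1) y / f 0 y)
      ((hf (n + 1) le_rfl).div (hf 0 (by omega)) hf0).continuousOn hx hxs
      fun t => by rw [hfx t, zero_div]
    obtain ⟨i, hi, z, hz, hWz⟩ := ih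
      (f := fun c => derivWithin (fun y => f (c + 1) y / f 0 y) s)
      (fun c hc => (((hf (c + 1) (by omega)).div (hf 0 (by omega)) hf0).derivWithin hsu
        le_rfl)) hy hys hqy
    rw [Finset.mem_Icc] at hi
    refine ⟨i + 1, Finset.mem_Icc.mpr ⟨by omega, by omega⟩, z, hz, ?_⟩
    rw [wronskianOn_succ_eq_pow_mul_wronskianOn_derivWithin_div hsu hz
      (fun c hc => hf c (by omega)) hf0, hWz, mul_zero]

theorem Finset.card_lt_of_forall_strictMono_exists_mem_Icc {α : Type*} [LinearOrder α]
    (S T : Finset α) (n : ℕ) (hST : ∀ x : Fin (n + 1) → α, StrictMono x → (∀ t, x t ∈ T) →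
      ∃ s ∈ S, x 0 ≤ s ∧ s ≤ x (Fin.last n)) :
    T.card < (S.card + 1) * (n + 1) := by
  by_contra! hT
  -- cut the first `(#S + 1) * (n + 1)` points of `T` into `#S + 1` consecutive blocks
  have hidx : ∀ (b : Fin (S.card + 1)) (t : Fin (n + 1)), b * (n + 1) + t < T.card :=
    fun b t => calc (b : ℕ) * (n + 1) + t < (b + 1) * (n + 1) := by rw [add_one_mul]; omega
      _ ≤ (S.card + 1) * (n + 1) := Nat.mul_le_mul_right _ b.isLt
      _ ≤ T.card := hT
  let e := T.orderEmbOfFin rfl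
  choose φ hφS hφ using fun b : Fin (S.card + 1) => hST (fun t => e ⟨_, hidx b t⟩)
    (fun t t' htt' => e.strictMono (Fin.mk_lt_mk.mpr (by simpa using htt')))
    fun t => T.orderEmbOfFin_mem rfl _
  have hφmono : StrictMono φ := fun b b' hbb' => calc
    φ b ≤ e ⟨_, hidx b (Fin.last n)⟩ := (hφ b).2
    _ < e ⟨_, hidx b' 0⟩ := e.strictMono <| Fin.mk_lt_mk.mpr <| by
      have := Nat.mul_le_mul_right (n + 1) (show (b : ℕ) + 1 ≤ b' from hbb')
      rw [add_one_mul] at this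
      simp only [Fin.val_last, Fin.val_zero]
      omega
    _ ≤ φ b' := (hφ b').1
  have := Finset.card_le_card_of_injOn (s := .univ) φ (fun b _ => hφS b) hφmono.injective.injOn
  rw [Finset.card_univ, Fintype.card_fin] at this
  omega

theorem Set.finite_and_ncard_lt_of_forall_strictMono_exists_mem_Icc {α : Type*} [LinearOrder α]
    (S : Finset α) (Z : Set α) (n : ℕ) (hSZ : ∀ x : Fin (n + 1) → α, StrictMono x →
      (∀ t, x t ∈ Z) → ∃ s ∈ S, x 0 ≤ s ∧ s ≤ x (Fin.last n)) :
    Z.Finite ∧ Z.ncard < (S.card + 1) * (n + 1) := by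
  have hcard : ∀ T : Finset α, ↑T ⊆ Z → T.card < (S.card + 1) * (n + 1) := fun T hT =>
    S.card_lt_of_forall_strictMono_exists_mem_Icc T n fun x hx hxT =>
      hSZ x hx fun t => hT (hxT t)
  have hZ : Z.Finite := by
    by_contra hZ
    obtain ⟨T, hTZ, hT⟩ := Set.Infinite.exists_subset_card_eq hZ ((S.card + 1) * (n + 1))
    exact (hcard T hTZ).ne hT
  exact ⟨hZ, Set.ncard_eq_toFinset_card Z hZ ▸ hcard _ (by simp)⟩

theorem exists_ne_zero_and_sum_range_eq {R : Type*} [Semiring R] {k : ℕ} {a : ℕ → R}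
    (ha : ∃ i < k, a i ≠ 0) :
    ∃ j < k, a j ≠ 0 ∧ ∀ g : ℕ → R, ∑ i ∈ Finset.range k, a i * g i =
      ∑ i ∈ Finset.range (j + 1), a i * g i := by
  classical
  obtain ⟨i, hik, hai⟩ := ha
  set j := Nat.findGreatest (a · ≠ 0) (k - 1)
  have hjk : j ≤ k - 1 := Nat.findGreatest_le _
  refine ⟨j, by omega, Nat.findGreatest_spec (P := (a · ≠ 0)) (by omega : i ≤ k - 1) hai,
    fun g => (Finset.sum_subset (Finset.range_subset_range.mpr (by omega)) fun c hck hcj => ?_).symm⟩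
  rw [Finset.mem_range] at hck hcj
  rw [not_not.mp (Nat.findGreatest_is_greatest (P := (a · ≠ 0)) (by omega : j < c) (by omega)),
    zero_mul]

theorem exists_wronskianOn_eq_zero_mem_Icc {I : Set ℝ} (hI : I.OrdConnected) {f : ℕ → ℝ → ℝ}
    {j : ℕ} (hf : ∀ i ≤ j, ContDiffOn ℝ ∞ (f i) I) {a : ℕ → ℝ} (haj : a j ≠ 0)
    {x : Fin (j + 1) → ℝ} (hx : StrictMono x) (hxI : ∀ t, x t ∈ I)
    (hfx : ∀ t, ∑ c ∈ Finset.range (j + 1), a c * f c (x t) = 0) :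
    ∃ i ∈ Finset.Icc 1 (j + 1), ∃ y ∈ Icc (x 0) (x (Fin.last j)), wronskianOn I f i y = 0 := by
  rcases j.eq_zero_or_pos with rfl | hj
  · refine ⟨1, by simp, x 0, ⟨le_rfl, hx.monotone (Fin.zero_le _)⟩, ?_⟩
    have := hfx 0
    rw [Finset.sum_range_one, mul_eq_zero] at this
    rw [wronskianOn_one]
    exact this.resolve_left haj
  have hx0 : x 0 < x (Fin.last j) := hx (Fin.lt_def.mpr (by simpa using hj))
  set J := Icc (x 0) (x (Fin.last j))
  have hJI : J ⊆ I := hI.out (hxI 0) (hxI _)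
  have hJu : UniqueDiffOn ℝ J := uniqueDiffOn_Icc hx0
  have hIu : UniqueDiffOn ℝ I := hI.uniqueDiffOn_of_lt (hxI 0) (hxI _) hx0
  set h := Function.update f j fun y => ∑ c ∈ Finset.range (j + 1), a c * f c y
  have hh : ∀ i ≤ j, ContDiffOn ℝ ∞ (h i) J := by
    intro i hi
    rcases eq_or_ne i j with rfl | hij
    · simp only [h, Function.update_self]
      exact ContDiffOn.sum fun c hc =>
        contDiffOn_const.mul ((hf c (Nat.lt_succ_iff.mp (Finset.mem_range.mp hc))).mono hJI)
    · simpa only [h, Function.update_of_ne hij] using (hf i hi).mono hJI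
  obtain ⟨i, hi, y, hyJ, hWy⟩ := exists_wronskianOn_eq_zero_of_strictMono ordConnected_Icc hh hx
    (fun t => ⟨hx.monotone (Fin.zero_le t), hx.monotone (Fin.le_last t)⟩)
    (fun t => by simpa only [h, Function.update_self] using hfx t)
  refine ⟨i, hi, y, hyJ, ?_⟩
  rw [Finset.mem_Icc] at hi
  rw [← wronskianOn_subset hJI hJu hIu (fun c hc => hf c (by omega)) hyJ]
  rcases hi.2.lt_or_eq with hi | rfl
  · rwa [wronskianOn_congr (g := f) (fun c hc => by
      simp only [h, Function.update_of_ne (show c ≠ j by omega)]; exact eqOn_refl _ _) hyJ] at hWy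
  · rw [wronskianOn_update_sum hJu hyJ (fun c hc => (hf c hc).mono hJI)] at hWy
    exact (mul_eq_zero.mp hWy).resolve_left haj

theorem stmt1_general (k : ℕ) (I : Set ℝ) (hI : I.OrdConnected)
    (f : ℕ → ℝ → ℝ) (hf : ∀ i < k, AnalyticOn ℝ (f i) I)
    (hWfin : ∀ i, 1 ≤ i → i ≤ k → {x ∈ I | wronskianOn I f i x = 0}.Finite)
    (a : ℕ → ℝ) (ha : ∃ i < k, a i ≠ 0) :
    {x ∈ I | (∑ i ∈ Finset.range k, a i * f i x) = 0}.Finite ∧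
      {x ∈ I | (∑ i ∈ Finset.range k, a i * f i x) = 0}.ncard ≤
        (1 + ∑ i ∈ Finset.Icc 1 k, {x ∈ I | wronskianOn I f i x = 0}.ncard) * k - 1 := by
  obtain ⟨j, hjk, haj, hsum⟩ := exists_ne_zero_and_sum_range_eq ha
  set Z := {x ∈ I | (∑ i ∈ Finset.range k, a i * f i x) = 0}
  set W := ⋃ i ∈ Finset.Icc 1 k, {x ∈ I | wronskianOn I f i x = 0}
  have hW : W.Finite := Set.Finite.biUnion (Finset.Icc 1 k).finite_toSet fun i hi =>
    hWfin i (Finset.mem_Icc.mp hi).1 (Finset.mem_Icc.mp hi).2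
  have hWZ : ∀ x : Fin (j + 1) → ℝ, StrictMono x → (∀ t, x t ∈ Z) →
      ∃ y ∈ hW.toFinset, x 0 ≤ y ∧ y ≤ x (Fin.last j) := by
    intro x hx hxZ
    obtain ⟨i, hi, y, hy, hWy⟩ := exists_wronskianOn_eq_zero_mem_Icc hI
      (fun i hi => (hf i (by omega)).contDiffOn_of_completeSpace) haj hx (fun t => (hxZ t).1)
      (fun t => (hsum fun i => f i (x t)) ▸ (hxZ t).2)
    rw [Finset.mem_Icc] at hi
    refine ⟨y, hW.mem_toFinset.mpr ?_, hy⟩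
    exact Set.mem_biUnion (Finset.mem_Icc.mpr ⟨hi.1, by omega⟩)
      ⟨hI.out (hxZ 0).1 (hxZ _).1 hy, hWy⟩
  obtain ⟨hZ, hZcard⟩ := Set.finite_and_ncard_lt_of_forall_strictMono_exists_mem_Icc _ Z j hWZ
  have hWcard : hW.toFinset.card ≤ ∑ i ∈ Finset.Icc 1 k, {x ∈ I | wronskianOn I f i x = 0}.ncard :=
    Set.ncard_eq_toFinset_card W hW ▸ Finset.set_ncard_biUnion_le _ _
  refine ⟨hZ, Nat.le_sub_one_of_lt (hZcard.trans_le ?_)⟩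
  rw [add_comm 1]
  exact Nat.mul_le_mul (by omega) hjk

/-- If `f 0, …, f (k-1)` are analytic on an interval `I` and each Wronskian
`W(f 0, …, f (i-1))`, `1 ≤ i ≤ k`, has finitely many zeros in `I`, then for any
constants not all zero, the number of distinct zeros of the linear combination satisfies
`Z(a_1 f_1 + … + a_k f_k) ≤ (1 + Σ_{i=1}^k Z(W(f_1,…,f_i))) * k - 1`. -/
theorem stmt1 (k : ℕ) (hk : 1 ≤ k) (I : Set ℝ) (hI : I.OrdConnected) (hI' : I.Nontrivial)
    (f : ℕ → ℝ → ℝ) (hf : ∀ i < k, AnalyticOn ℝ (f i) I)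
    (hWfin : ∀ i, 1 ≤ i → i ≤ k → {x ∈ I | wronskianOn I f i x = 0}.Finite)
    (a : ℕ → ℝ) (ha : ∃ i < k, a i ≠ 0) :
    {x ∈ I | (∑ i ∈ Finset.range k, a i * f i x) = 0}.Finite ∧
      {x ∈ I | (∑ i ∈ Finset.range k, a i * f i x) = 0}.ncard ≤
        (1 + ∑ i ∈ Finset.Icc 1 k, {x ∈ I | wronskianOn I f i x = 0}.ncard) * k - 1 :=
  stmt1_general k I hI f hf hWfin a ha
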